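/- arXiv:1301.4807 — 3 statements merged into one kernel-verified Lean document; each statement's English description precedes it below -/
import Mathlib

section
/- For a composition m = g ∘ F_β with g ∈ C²(ℝ), the second partial derivatives satisfy ∂_j ∂_k m(z) = g''(F_β(z)) π_j(z) π_k(z) + β g'(F_β(z)) w_{jk}(z), and consequently ∑_{j,k=1}^p |∂_j ∂_k m(z)| ≤ |g''(F_β(z))| + 2β |g'(F_β(z))| for every z ∈ ℝ^p. -/
open MeasureTheory ProbabilityTheory Real

/-- The smooth max function `F_β`. -/
noncomputable def Fbeta (p : ℕ) (β : ℝ) (z : Fin p → ℝ) : ℝ :=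
  β⁻¹ * Real.log (∑ j, Real.exp (β * z j))

/-- The softmax weights `π_j`. -/
noncomputable def piB (p : ℕ) (β : ℝ) (z : Fin p → ℝ) (j : Fin p) : ℝ :=
  Real.exp (β * z j) / ∑ m, Real.exp (β * z m)

/-- `w_{jk}(z) = 1(j=k) π_j(z) − π_j(z) π_k(z)`. -/
noncomputable def wB (p : ℕ) (β : ℝ) (z : Fin p → ℝ) (j k : Fin p) : ℝ :=
  (if j = k then piB p β z j else 0) - piB p β z j * piB p β z k

/-!
Since `∇F_β = π` and `π_k(z) = exp (β (z_k - F_β(z)))`, the softmax weights satisfy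
`∇π_k = β π_k (e_k - π)`, i.e. `∂_j π_k = β w_{jk}`; the formula is then the chain rule for
the Hessian of `g ∘ F_β`. For the bound, `|w_{jk}| ≤ 1(j=k) π_j + π_j π_k` and
`∑ π_j ≤ 1`, so `∑ |w_{jk}| ≤ 2` and `∑ π_j π_k ≤ 1`.
-/

open Finset ContinuousLinearMap

theorem fderiv_fderiv_comp_apply {E : Type*} [NormedAddCommGroup E] [NormedSpace ℝ E]
    {g : ℝ → ℝ} {f : E → ℝ} {z u v : E} (hg : Differentiable ℝ g)
    (hg' : DifferentiableAt ℝ (deriv g) (f z)) (hf : Differentiable ℝ f)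
    (hf' : DifferentiableAt ℝ (fun y => fderiv ℝ f y v) z) :
    fderiv ℝ (fun y => fderiv ℝ (fun w => g (f w)) y v) z u
      = deriv (deriv g) (f z) * fderiv ℝ f z u * fderiv ℝ f z v
        + deriv g (f z) * fderiv ℝ (fun y => fderiv ℝ f y v) z u := by
  have hfirst : (fun y => fderiv ℝ (fun w => g (f w)) y v)
      = fun y => deriv g (f y) * fderiv ℝ f y v := by
    funext y
    have h : HasFDerivAt (fun w => g (f w)) (deriv g (f y) • fderiv ℝ f y) y :=
      (hg (f y)).hasDerivAt.comp_hasFDerivAt y (hf y).hasFDerivAt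
    rw [h.fderiv]
    rfl
  have hdg : HasFDerivAt (fun y => deriv g (f y)) (deriv (deriv g) (f z) • fderiv ℝ f z) z :=
    hg'.hasDerivAt.comp_hasFDerivAt z (hf z).hasFDerivAt
  rw [hfirst, fderiv_fun_mul hdg.differentiableAt hf', hdg.fderiv]
  simp only [add_apply, smul_apply, smul_eq_mul]
  ring

section

variable {p : ℕ} {β : ℝ}

noncomputable def gradCLM (c : Fin p → ℝ) : (Fin p → ℝ) →L[ℝ] ℝ :=
  ∑ j, c j • proj j

@[simp]
theorem gradCLM_single (c : Fin p → ℝ) (k : Fin p) : gradCLM c (Pi.single k 1) = c k := by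
  simp [gradCLM, Pi.single_apply]

theorem smul_gradCLM (a : ℝ) (c : Fin p → ℝ) : a • gradCLM c = gradCLM (a • c) := by
  simp only [gradCLM, smul_sum, smul_smul, Pi.smul_apply, smul_eq_mul]

theorem sum_exp_pos [Nonempty (Fin p)] (z : Fin p → ℝ) : 0 < ∑ m, exp (β * z m) :=
  sum_pos (fun _ _ => exp_pos _) univ_nonempty

theorem piB_nonneg (z : Fin p → ℝ) (j : Fin p) : 0 ≤ piB p β z j :=
  div_nonneg (exp_pos _).le (sum_nonneg fun _ _ => (exp_pos _).le)

theorem sum_piB_le_one (z : Fin p → ℝ) : ∑ j, piB p β z j ≤ 1 := by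
  rcases isEmpty_or_nonempty (Fin p) with _ | _
  · simp
  · simp only [piB, ← sum_div]
    exact (div_self (sum_exp_pos z).ne').le

theorem piB_eq_exp_sub_Fbeta [Nonempty (Fin p)] (hβ : β ≠ 0) (z : Fin p → ℝ) (k : Fin p) :
    piB p β z k = exp (β * (z k - Fbeta p β z)) := by
  rw [piB, Fbeta, mul_sub, ← mul_assoc, mul_inv_cancel₀ hβ, one_mul, exp_sub,
    exp_log (sum_exp_pos z)]

theorem hasFDerivAt_sum_exp (z : Fin p → ℝ) :
    HasFDerivAt (fun y : Fin p → ℝ => ∑ m, exp (β * y m))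
      (gradCLM fun m => exp (β * z m) * β) z := by
  have h := HasFDerivAt.fun_sum (u := univ) fun m _ =>
    ((hasFDerivAt_apply (𝕜 := ℝ) m z).const_mul β).exp
  simpa only [gradCLM, smul_smul] using h

theorem hasFDerivAt_Fbeta [Nonempty (Fin p)] (hβ : β ≠ 0) (z : Fin p → ℝ) :
    HasFDerivAt (Fbeta p β) (gradCLM (piB p β z)) z := by
  have h := ((hasFDerivAt_sum_exp (β := β) z).log (sum_exp_pos z).ne').const_mul β⁻¹
  rw [smul_gradCLM, smul_gradCLM] at h
  have hpi : piB p β z = β⁻¹ • (∑ m, exp (β * z m))⁻¹ • fun m => exp (β * z m) * β := by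
    funext j
    simp only [piB, Pi.smul_apply, smul_eq_mul]
    field_simp
  rw [hpi]
  exact h

theorem hasFDerivAt_piB [Nonempty (Fin p)] (hβ : β ≠ 0) (z : Fin p → ℝ) (k : Fin p) :
    HasFDerivAt (fun y => piB p β y k) ((β * piB p β z k) • (proj k - gradCLM (piB p β z))) z := by
  have h := (((hasFDerivAt_apply (𝕜 := ℝ) k z).fun_sub (hasFDerivAt_Fbeta hβ z)).const_mul β).exp
  have hpi : (fun y => piB p β y k) = fun y => exp (β * (y k - Fbeta p β y)) :=
    funext fun y => piB_eq_exp_sub_Fbeta hβ y k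
  rwa [hpi, piB_eq_exp_sub_Fbeta hβ z k, mul_comm, ← smul_smul]

theorem fderiv_Fbeta_single [Nonempty (Fin p)] (hβ : β ≠ 0) (z : Fin p → ℝ) (k : Fin p) :
    fderiv ℝ (Fbeta p β) z (Pi.single k 1) = piB p β z k := by
  rw [(hasFDerivAt_Fbeta hβ z).fderiv, gradCLM_single]

theorem fderiv_piB_single [Nonempty (Fin p)] (hβ : β ≠ 0) (z : Fin p → ℝ) (j k : Fin p) :
    fderiv ℝ (fun y => piB p β y k) z (Pi.single j 1) = β * wB p β z j k := by
  rw [(hasFDerivAt_piB hβ z k).fderiv]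
  simp only [smul_apply, sub_apply, gradCLM_single, proj_apply, smul_eq_mul, wB]
  rcases eq_or_ne j k with rfl | hjk
  · rw [Pi.single_eq_same, if_pos rfl]
    ring
  · rw [Pi.single_eq_of_ne hjk.symm, if_neg hjk]
    ring

theorem fderiv_fderiv_comp_Fbeta_single (hβ : β ≠ 0) {g : ℝ → ℝ} (hg : Differentiable ℝ g)
    (z : Fin p → ℝ) (hg' : DifferentiableAt ℝ (deriv g) (Fbeta p β z)) (j k : Fin p) :
    fderiv ℝ (fun y => fderiv ℝ (fun w => g (Fbeta p β w)) y (Pi.single k 1)) z (Pi.single j 1)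
      = deriv (deriv g) (Fbeta p β z) * piB p β z j * piB p β z k
        + β * deriv g (Fbeta p β z) * wB p β z j k := by
  have : Nonempty (Fin p) := ⟨j⟩
  have hF : Differentiable ℝ (Fbeta p β) := fun y => (hasFDerivAt_Fbeta hβ y).differentiableAt
  have hgrad : (fun y => fderiv ℝ (Fbeta p β) y (Pi.single k 1)) = fun y => piB p β y k :=
    funext fun y => fderiv_Fbeta_single hβ y k
  have hgrad' : DifferentiableAt ℝ (fun y => fderiv ℝ (Fbeta p β) y (Pi.single k 1)) z :=
    hgrad ▸ (hasFDerivAt_piB hβ z k).differentiableAt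
  rw [fderiv_fderiv_comp_apply hg hg' hF hgrad', hgrad, fderiv_piB_single hβ,
    fderiv_Fbeta_single hβ, fderiv_Fbeta_single hβ]
  ring

theorem abs_wB_le (z : Fin p → ℝ) (j k : Fin p) :
    |wB p β z j k| ≤ (if j = k then piB p β z j else 0) + piB p β z j * piB p β z k := by
  refine (abs_sub _ _).trans_eq ?_
  rw [abs_of_nonneg (by split_ifs <;> simp [piB_nonneg]),
    abs_of_nonneg (mul_nonneg (piB_nonneg z j) (piB_nonneg z k))]

theorem sum_sum_abs_wB_le (z : Fin p → ℝ) : ∑ j, ∑ k, |wB p β z j k| ≤ 2 := by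
  have h1 := sum_piB_le_one (β := β) z
  have h0 : 0 ≤ ∑ j, piB p β z j := sum_nonneg fun j _ => piB_nonneg z j
  calc ∑ j, ∑ k, |wB p β z j k|
      ≤ ∑ j, ∑ k, ((if j = k then piB p β z j else 0) + piB p β z j * piB p β z k) := by
        gcongr with j _ k _
        exact abs_wB_le z j k
    _ = ∑ j, piB p β z j + (∑ j, piB p β z j) ^ 2 := by
        simp only [sum_add_distrib, sum_ite_eq, mem_univ, if_true, sq, sum_mul_sum]
    _ ≤ 2 := by linarith [pow_le_one₀ (n := 2) h0 h1]

theorem sum_sum_abs_mul_piB_add_mul_wB_le (hβ : 0 ≤ β) (A B : ℝ) (z : Fin p → ℝ) :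
    ∑ j, ∑ k, |A * piB p β z j * piB p β z k + β * B * wB p β z j k| ≤ |A| + 2 * β * |B| := by
  have h1 := sum_piB_le_one (β := β) z
  have h0 : 0 ≤ ∑ j, piB p β z j := sum_nonneg fun j _ => piB_nonneg z j
  calc ∑ j, ∑ k, |A * piB p β z j * piB p β z k + β * B * wB p β z j k|
      ≤ ∑ j, ∑ k, (|A| * (piB p β z j * piB p β z k) + β * |B| * |wB p β z j k|) := by
        gcongr with j _ k _
        refine (abs_add_le _ _).trans_eq ?_
        rw [abs_mul, abs_mul, abs_mul, abs_mul, abs_of_nonneg (piB_nonneg z j),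
          abs_of_nonneg (piB_nonneg z k), abs_of_nonneg hβ, mul_assoc]
    _ = |A| * (∑ j, piB p β z j) ^ 2 + β * |B| * ∑ j, ∑ k, |wB p β z j k| := by
        simp only [sum_add_distrib, ← mul_sum, sq, sum_mul_sum]
    _ ≤ |A| * 1 + β * |B| * 2 := by
        gcongr
        · exact pow_le_one₀ h0 h1
        · exact sum_sum_abs_wB_le z
    _ = |A| + 2 * β * |B| := by ring

end

theorem second_deriv_composition_general (p : ℕ) (β : ℝ) (hβ : 0 < β)
    (g : ℝ → ℝ) (hg : ContDiff ℝ 2 g) (z : Fin p → ℝ) :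
    (∀ j k : Fin p,
      fderiv ℝ (fun y => fderiv ℝ (fun w => g (Fbeta p β w)) y (Pi.single k 1)) z
          (Pi.single j 1)
        = deriv (deriv g) (Fbeta p β z) * piB p β z j * piB p β z k
            + β * deriv g (Fbeta p β z) * wB p β z j k) ∧
    (∑ j, ∑ k, |fderiv ℝ (fun y => fderiv ℝ (fun w => g (Fbeta p β w)) y (Pi.single k 1)) z
          (Pi.single j 1)|)
      ≤ |deriv (deriv g) (Fbeta p β z)| + 2 * β * |deriv g (Fbeta p β z)| := by
  have hpartial := fderiv_fderiv_comp_Fbeta_single hβ.ne' (hg.differentiable two_ne_zero) z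
    (hg.differentiable_deriv_two _)
  refine ⟨hpartial, ?_⟩
  simp only [hpartial]
  exact sum_sum_abs_mul_piB_add_mul_wB_le hβ.le _ _ z

theorem second_deriv_composition (p : ℕ) (hp : 1 ≤ p) (β : ℝ) (hβ : 0 < β)
    (g : ℝ → ℝ) (hg : ContDiff ℝ 2 g) (z : Fin p → ℝ) :
    (∀ j k : Fin p,
      fderiv ℝ (fun y => fderiv ℝ (fun w => g (Fbeta p β w)) y (Pi.single k 1)) z
          (Pi.single j 1)
        = deriv (deriv g) (Fbeta p β z) * piB p β z j * piB p β z k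
            + β * deriv g (Fbeta p β z) * wB p β z j k) ∧
    (∑ j, ∑ k, |fderiv ℝ (fun y => fderiv ℝ (fun w => g (Fbeta p β w)) y (Pi.single k 1)) z
          (Pi.single j 1)|)
      ≤ |deriv (deriv g) (Fbeta p β z)| + 2 * β * |deriv g (Fbeta p β z)| :=
  second_deriv_composition_general p β hβ g hg z
end

section
/- (Maximal inequality for sums of nonnegative random vectors) Let V₁,…,V_n be independent random vectors in ℝ^p with p ≥ 2 and V_{ij} ≥ 0 for all i, j. Then E[max_{1≤j≤p} ∑_{i=1}^n V_{ij}] ≤ K ( max_{1≤j≤p} E[∑_{i=1}^n V_{ij}] + E[max_{i,j} V_{ij}] · log p ) for some universal constant K. -/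
/-!
Let `M = max_{i,j} V_ij`, `M_i = max_j V_ij`, and truncate at a level `τ` just above `4 E M`.

Truncated part: the sums `∑_i min (V_ij, τ)` are sums of independent `[0, τ]`-valued variables.
By convexity, `e^s ≤ 1 + (e - 1) s` on `[0, 1]`, so their moment generating function at `1 / τ` is
at most `exp ((e - 1) E S_j / τ)`, and the log-sum-exp bound gives
`E max_j ∑_i min (V_ij, τ) ≤ τ log p + (e - 1) max_j E S_j`, where `S_j = ∑_i V_ij`.

Excess: `V_ij - min (V_ij, τ)` is at most `M_i 1{M_i > τ}`, whose sum over `i` is `T`.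
Split each term of `T` according to whether an earlier row already exceeded `τ`. On that event,
independence gives at most `P (M > τ) E T` in total. Off that event only the first exceeding row
contributes, so that part is at most `M`. Hence `E T ≤ P (M > τ) E T + E M`, and Markov's
inequality `P (M > τ) ≤ 1/4` turns this into `E T ≤ 4/3 E M` (a Hoffmann-Jørgensen argument).
-/

open MeasureTheory ProbabilityTheory Real

lemma exp_le_one_add_exp_one_sub_one_mul {s : ℝ} (h0 : 0 ≤ s) (h1 : s ≤ 1) :
    exp s ≤ 1 + (exp 1 - 1) * s := by
  have h := convexOn_exp.2 (Set.mem_univ 0) (Set.mem_univ 1) (sub_nonneg.2 h1) h0 (by ring)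
  simp only [smul_eq_mul, mul_zero, mul_one, zero_add, exp_zero] at h
  linarith

lemma le_min_add_ite_lt {v M τ : ℝ} (hvM : v ≤ M) (hτ : 0 ≤ τ) :
    v ≤ min v τ + if τ < M then M else 0 := by
  split_ifs with h
  · rcases le_total v τ with hvτ | hτv
    · rw [min_eq_left hvτ]; linarith
    · rw [min_eq_right hτv]; linarith
  · rw [min_eq_left (hvM.trans (not_lt.1 h)), add_zero]

section FiniteSups

variable {ι κ : Type*} [Fintype ι] [Fintype κ]

lemma iSup_sum_le_iSup_sum_min_add_sum_ite [Nonempty κ] {v : ι → κ → ℝ} {τ : ℝ} (hτ : 0 ≤ τ) :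
    ⨆ j, ∑ i, v i j
      ≤ (⨆ j, ∑ i, min (v i j) τ) + ∑ i, if τ < ⨆ j, v i j then ⨆ j, v i j else 0 := by
  refine ciSup_le fun j => ?_
  calc ∑ i, v i j ≤ ∑ i, (min (v i j) τ + if τ < ⨆ j, v i j then ⨆ j, v i j else 0) :=
        Finset.sum_le_sum fun i _ =>
          le_min_add_ite_lt (le_ciSup (Finite.bddAbove_range (v i)) j) hτ
    _ ≤ _ := by
        rw [Finset.sum_add_distrib]
        gcongr
        exact le_ciSup (Finite.bddAbove_range fun j => ∑ i, min (v i j) τ) j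

lemma iSup_iSup_le_iSup_sum {v : ι → κ → ℝ} (hv : ∀ i j, 0 ≤ v i j) :
    ⨆ i, ⨆ j, v i j ≤ ⨆ j, ∑ i, v i j := by
  have hS : ∀ j, ∑ i, v i j ≤ ⨆ j, ∑ i, v i j := fun j =>
    le_ciSup (Finite.bddAbove_range fun j => ∑ i, v i j) j
  have h0 : 0 ≤ ⨆ j, ∑ i, v i j := Real.iSup_nonneg fun j => Finset.sum_nonneg fun i _ => hv i j
  exact Real.iSup_le (fun i => Real.iSup_le (fun j =>
    (Finset.single_le_sum (fun k _ => hv k j) (Finset.mem_univ i)).trans (hS j)) h0) h0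

lemma sum_ite_first_exceedance_le_iSup [LinearOrder ι] {x : ι → ℝ} (hx : ∀ i, 0 ≤ x i) (τ : ℝ) :
    ∑ i, (if (∀ k < i, x k ≤ τ) ∧ τ < x i then x i else 0) ≤ ⨆ i, x i := by
  classical
  cases isEmpty_or_nonempty ι
  · simp
  set s := Finset.univ.filter fun i => (∀ k < i, x k ≤ τ) ∧ τ < x i
  have hs : s.card ≤ 1 := Finset.card_le_one.2 fun i hi j hj => by
    simp only [s, Finset.mem_filter, Finset.mem_univ, true_and] at hi hj
    by_contra hne
    rcases lt_or_gt_of_ne hne with h | h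
    · exact (hj.1 i h).not_gt hi.2
    · exact (hi.1 j h).not_gt hj.2
  obtain ⟨i₀, hi₀⟩ := Finset.card_le_one_iff_subset_singleton.1 hs
  rw [← Finset.sum_filter]
  calc ∑ i ∈ s, x i ≤ ∑ i ∈ {i₀}, x i :=
        Finset.sum_le_sum_of_subset_of_nonneg hi₀ fun i _ _ => hx i
    _ ≤ ⨆ i, x i := by
        rw [Finset.sum_singleton]; exact le_ciSup (Finite.bddAbove_range x) i₀

end FiniteSups

namespace ProbabilityTheory

variable {Ω : Type*} [MeasurableSpace Ω] {μ : Measure Ω}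

lemma mgf_inv_le_exp_integral [IsProbabilityMeasure μ] {X : Ω → ℝ} {τ : ℝ} (hX : Measurable X)
    (hX0 : ∀ ω, 0 ≤ X ω) (hXτ : ∀ ω, X ω ≤ τ) :
    mgf X μ τ⁻¹ ≤ exp ((exp 1 - 1) * (τ⁻¹ * μ[X])) := by
  have hτX : ∀ ω, τ⁻¹ * X ω ∈ Set.Icc 0 1 := fun ω =>
    ⟨mul_nonneg (inv_nonneg.2 ((hX0 ω).trans (hXτ ω))) (hX0 ω),
      inv_mul_le_one_of_le₀ (hXτ ω) ((hX0 ω).trans (hXτ ω))⟩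
  have hXint : Integrable X μ :=
    .of_mem_Icc 0 τ hX.aemeasurable (.of_forall fun ω => ⟨hX0 ω, hXτ ω⟩)
  have hlin : Integrable (fun ω => 1 + (exp 1 - 1) * (τ⁻¹ * X ω)) μ :=
    (integrable_const 1).add ((hXint.const_mul τ⁻¹).const_mul _)
  calc mgf X μ τ⁻¹ ≤ ∫ ω, 1 + (exp 1 - 1) * (τ⁻¹ * X ω) ∂μ :=
        integral_mono_of_nonneg (.of_forall fun ω => (exp_pos _).le) hlin
          (.of_forall fun ω => exp_le_one_add_exp_one_sub_one_mul (hτX ω).1 (hτX ω).2)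
    _ = 1 + (exp 1 - 1) * (τ⁻¹ * μ[X]) := by
        rw [integral_add (integrable_const 1) ((hXint.const_mul τ⁻¹).const_mul _),
          integral_const_mul, integral_const_mul]
        simp
    _ ≤ exp ((exp 1 - 1) * (τ⁻¹ * μ[X])) := by
        linarith [add_one_le_exp ((exp 1 - 1) * (τ⁻¹ * μ[X]))]

lemma iIndepFun.mgf_sum_inv_le_exp_integral {ι : Type*} {X : ι → Ω → ℝ} {τ : ℝ}
    (hind : iIndepFun X μ) (hX : ∀ i, Measurable (X i))
    (hX0 : ∀ i ω, 0 ≤ X i ω) (hXτ : ∀ i ω, X i ω ≤ τ) (s : Finset ι) :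
    mgf (∑ i ∈ s, X i) μ τ⁻¹ ≤ exp ((exp 1 - 1) * (τ⁻¹ * ∫ ω, ∑ i ∈ s, X i ω ∂μ)) := by
  have : IsProbabilityMeasure μ := hind.isProbabilityMeasure
  have hXint : ∀ i, Integrable (X i) μ := fun i =>
    .of_mem_Icc 0 τ (hX i).aemeasurable (.of_forall fun ω => ⟨hX0 i ω, hXτ i ω⟩)
  rw [hind.mgf_sum hX, integral_finsetSum s fun i _ => hXint i, Finset.mul_sum, Finset.mul_sum,
    exp_sum]
  exact Finset.prod_le_prod (fun i _ => mgf_nonneg)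
    fun i _ => mgf_inv_le_exp_integral (hX i) (hX0 i) (hXτ i)

lemma integral_iSup_le_of_mgf_le [IsProbabilityMeasure μ] {κ : Type*} [Fintype κ] [Nonempty κ]
    {Y : κ → Ω → ℝ} {τ B : ℝ} (hτ : 0 < τ) (hsup : Integrable (fun ω => ⨆ j, Y j ω) μ)
    (hexp : ∀ j, Integrable (fun ω => exp (τ⁻¹ * Y j ω)) μ)
    (hmgf : ∀ j, mgf (Y j) μ τ⁻¹ ≤ exp (τ⁻¹ * B)) :
    ∫ ω, ⨆ j, Y j ω ∂μ ≤ τ * log (Fintype.card κ) + B := by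
  -- tangent line `y - a ≤ τ (exp ((y - a) / τ) - 1)`, with `a` chosen so that
  -- `∑ j, E exp ((Y j - a) / τ) ≤ 1`
  set a := τ * log (Fintype.card κ) + B
  set c := exp (-(τ⁻¹ * a))
  have hcard : (0 : ℝ) < Fintype.card κ := by exact_mod_cast Fintype.card_pos
  have hc : c * (Fintype.card κ * exp (τ⁻¹ * B)) = 1 := by
    have ha : τ⁻¹ * a = log (Fintype.card κ) + τ⁻¹ * B := by
      simp only [a]; field_simp
    simp only [c, ha, exp_neg, exp_add, exp_log hcard]
    field_simp
  have htangent : ∀ y, y ≤ a - τ + τ * c * exp (τ⁻¹ * y) := by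
    intro y
    have hexp : exp (τ⁻¹ * (y - a)) = c * exp (τ⁻¹ * y) := by
      rw [← exp_add]; ring_nf
    calc y = a - τ + τ * (τ⁻¹ * (y - a) + 1) := by field_simp; ring
      _ ≤ a - τ + τ * c * exp (τ⁻¹ * y) := by
        rw [mul_assoc, ← hexp]; gcongr; exact add_one_le_exp _
  have hpoint : ∀ ω, ⨆ j, Y j ω ≤ a - τ + τ * c * ∑ j, exp (τ⁻¹ * Y j ω) := fun ω =>
    ciSup_le fun j => (htangent (Y j ω)).trans <| by
      gcongr
      exact Finset.single_le_sum (f := fun k => exp (τ⁻¹ * Y k ω))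
        (fun k _ => (exp_pos _).le) (Finset.mem_univ j)
  have hsumint : Integrable (fun ω => τ * c * ∑ j, exp (τ⁻¹ * Y j ω)) μ :=
    (integrable_finsetSum _ fun j _ => hexp j).const_mul _
  calc ∫ ω, ⨆ j, Y j ω ∂μ ≤ ∫ ω, a - τ + τ * c * ∑ j, exp (τ⁻¹ * Y j ω) ∂μ :=
        integral_mono hsup ((integrable_const _).add hsumint) hpoint
    _ = a - τ + τ * c * ∑ j, mgf (Y j) μ τ⁻¹ := by
        rw [integral_add (integrable_const _) hsumint, integral_const_mul,
          integral_finsetSum _ fun j _ => hexp j]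
        simp [mgf]
    _ ≤ a - τ + τ * c * (Fintype.card κ * exp (τ⁻¹ * B)) := by
        gcongr
        simpa using Finset.sum_le_sum fun j (_ : j ∈ Finset.univ) => hmgf j
    _ = a := by rw [mul_assoc, hc]; ring

lemma iIndepFun.integral_iSup_sum_le_of_bounded {ι κ : Type*} [Fintype ι] [Fintype κ]
    [Nonempty κ] {W : ι → Ω → κ → ℝ} {τ : ℝ} (hτ : 0 < τ) (hW : iIndepFun W μ)
    (hWm : ∀ i, Measurable (W i)) (hW0 : ∀ i ω j, 0 ≤ W i ω j) (hWτ : ∀ i ω j, W i ω j ≤ τ) :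
    ∫ ω, ⨆ j, ∑ i, W i ω j ∂μ
      ≤ τ * log (Fintype.card κ) + (exp 1 - 1) * ⨆ j, ∫ ω, ∑ i, W i ω j ∂μ := by
  have : IsProbabilityMeasure μ := hW.isProbabilityMeasure
  have hWjm : ∀ j i, Measurable fun ω => W i ω j := fun j i =>
    (measurable_pi_apply j).comp (hWm i)
  have hSm : ∀ j, Measurable fun ω => ∑ i, W i ω j := fun j =>
    Finset.measurable_sum _ fun i _ => hWjm j i
  have hSτ : ∀ j ω, ∑ i, W i ω j ≤ Fintype.card ι * τ := fun j ω => by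
    simpa using Finset.sum_le_sum fun i (_ : i ∈ Finset.univ) => hWτ i ω j
  refine integral_iSup_le_of_mgf_le hτ ?_ ?_ fun j => ?_
  · exact .of_mem_Icc 0 (Fintype.card ι * τ) (Measurable.iSup hSm).aemeasurable
      (.of_forall fun ω => ⟨Real.iSup_nonneg fun j => Finset.sum_nonneg fun i _ => hW0 i ω j,
        ciSup_le fun j => hSτ j ω⟩)
  · exact fun j => integrable_exp_mul_of_le _ _ (inv_nonneg.2 hτ.le) (hSm j).aemeasurable
      (.of_forall (hSτ j))
  · have hsum : (fun ω => ∑ i, W i ω j) = ∑ i, fun ω => W i ω j := by ext; simp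
    have hWj : iIndepFun (fun i ω => W i ω j) μ := hW.comp _ fun i => measurable_pi_apply j
    calc mgf (fun ω => ∑ i, W i ω j) μ τ⁻¹
        ≤ exp ((exp 1 - 1) * (τ⁻¹ * ∫ ω, ∑ i, W i ω j ∂μ)) := by
          have h := hWj.mgf_sum_inv_le_exp_integral (hWjm j) (fun i ω => hW0 i ω j)
            (fun i ω => hWτ i ω j) Finset.univ
          rwa [← hsum] at h
      _ ≤ exp (τ⁻¹ * ((exp 1 - 1) * ⨆ j, ∫ ω, ∑ i, W i ω j ∂μ)) := by
          rw [mul_left_comm]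
          gcongr
          · linarith [add_one_le_exp 1]
          · exact le_ciSup (Finite.bddAbove_range fun j => ∫ ω, ∑ i, W i ω j ∂μ) j

section Exceedances

variable {ι : Type*} [Fintype ι] [LinearOrder ι] {X : ι → Ω → ℝ}

lemma iIndepFun.setIntegral_exists_lt_gt_eq_mul (hX : iIndepFun X μ)
    (hXm : ∀ i, Measurable (X i)) {f : ℝ → ℝ} (hf : Measurable f) (τ : ℝ) (i : ι) :
    ∫ ω in {ω | ∃ k < i, τ < X k ω}, f (X i ω) ∂μ
      = μ.real {ω | ∃ k < i, τ < X k ω} * ∫ ω, f (X i ω) ∂μ := by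
  set m : ι → MeasurableSpace Ω := fun k => MeasurableSpace.comap (X k) inferInstance
  have hm : ∀ k, m k ≤ ‹MeasurableSpace Ω› := fun k => (hXm k).comap_le
  have hind : Indep (⨆ k ∈ Set.Iio i, m k) (m i) μ :=
    indep_of_indep_of_le_right
      (indep_iSup_of_disjoint hm hX.iIndep (S := Set.Iio i) (T := {i}) (by simp))
      (le_iSup₂ (f := fun k (_ : k ∈ ({i} : Set ι)) => m k) i rfl)
  have hA : MeasurableSet[⨆ k ∈ Set.Iio i, m k] {ω | ∃ k < i, τ < X k ω} := by
    have : {ω | ∃ k < i, τ < X k ω} = ⋃ k ∈ Set.Iio i, X k ⁻¹' Set.Ioi τ := by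
      ext ω; simp
    rw [this]
    exact .biUnion (Set.to_countable _) fun k hk =>
      le_iSup₂ (f := fun k (_ : k ∈ Set.Iio i) => m k) k hk _ ⟨_, measurableSet_Ioi, rfl⟩
  exact hind.setIntegral_eq_mul (iSup₂_le fun k _ => hm k) (hXm i).aemeasurable hA
    hf.aestronglyMeasurable

lemma iIndepFun.integral_indicator_gt_eq (hX : iIndepFun X μ) (hXm : ∀ i, Measurable (X i))
    (τ : ℝ) (i : ι) (hXi : Integrable (X i) μ) :
    ∫ ω, {ω | τ < X i ω}.indicator (X i) ω ∂μ
      = μ.real {ω | ∃ k < i, τ < X k ω} * ∫ ω, {ω | τ < X i ω}.indicator (X i) ω ∂μ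
        + ∫ ω, {ω | ∃ k < i, τ < X k ω}ᶜ.indicator ({ω | τ < X i ω}.indicator (X i)) ω ∂μ := by
  have hA : MeasurableSet {ω | ∃ k < i, τ < X k ω} := by measurability
  have h : ∫ ω in {ω | ∃ k < i, τ < X k ω}, {ω | τ < X i ω}.indicator (X i) ω ∂μ
      = μ.real {ω | ∃ k < i, τ < X k ω} * ∫ ω, {ω | τ < X i ω}.indicator (X i) ω ∂μ :=
    hX.setIntegral_exists_lt_gt_eq_mul hXm (measurable_id.indicator measurableSet_Ioi) τ i
  rw [integral_indicator hA.compl, ← h]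
  exact (integral_add_compl hA (hXi.indicator (measurableSet_lt measurable_const (hXm i)))).symm

theorem iIndepFun.one_sub_measureReal_mul_integral_sum_indicator_le (hX : iIndepFun X μ)
    (hXm : ∀ i, Measurable (X i)) (hX0 : ∀ i ω, 0 ≤ X i ω)
    (hM : Integrable (fun ω => ⨆ i, X i ω) μ) (τ : ℝ) :
    (1 - μ.real {ω | τ < ⨆ i, X i ω}) * ∫ ω, ∑ i, {ω | τ < X i ω}.indicator (X i) ω ∂μ
      ≤ ∫ ω, ⨆ i, X i ω ∂μ := by
  have : IsProbabilityMeasure μ := hX.isProbabilityMeasure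
  set U : ι → Ω → ℝ := fun i => {ω | τ < X i ω}.indicator (X i)
  set A : ι → Set Ω := fun i => {ω | ∃ k < i, τ < X k ω}
  set θ := μ.real {ω | τ < ⨆ i, X i ω}
  have hXM : ∀ i ω, X i ω ≤ ⨆ i, X i ω := fun i ω =>
    le_ciSup (Finite.bddAbove_range fun k => X k ω) i
  have hXint : ∀ i, Integrable (X i) μ := fun i =>
    integrable_of_le_of_le (hXm i).aestronglyMeasurable (.of_forall (hX0 i))
      (.of_forall (hXM i)) (integrable_zero _ _ _) hM
  have hA : ∀ i, MeasurableSet (A i) := fun i => by measurability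
  have hU : ∀ i, Integrable (U i) μ := fun i =>
    (hXint i).indicator (measurableSet_lt measurable_const (hXm i))
  have hAU : ∀ i, Integrable ((A i)ᶜ.indicator (U i)) μ := fun i =>
    (hU i).indicator (hA i).compl
  have hsplit : ∀ i, ∫ ω, U i ω ∂μ ≤ θ * ∫ ω, U i ω ∂μ + ∫ ω, (A i)ᶜ.indicator (U i) ω ∂μ :=
    fun i => (hX.integral_indicator_gt_eq hXm τ i (hXint i)).trans_le <| by
      gcongr
      · exact integral_nonneg (Set.indicator_nonneg fun ω _ => hX0 i ω)
      · exact measureReal_mono fun ω ⟨k, _, hk⟩ => hk.trans_le (hXM k ω)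
  have hfirst : ∀ ω, ∑ i, (A i)ᶜ.indicator (U i) ω ≤ ⨆ i, X i ω := fun ω => by
    simp only [U, A, Set.indicator_apply, Set.mem_compl_iff, Set.mem_ofPred_eq, not_exists,
      not_and, not_lt, ← ite_and]
    exact sum_ite_first_exceedance_le_iSup (fun i => hX0 i ω) τ
  have hT : ∫ ω, ∑ i, U i ω ∂μ ≤ θ * ∫ ω, ∑ i, U i ω ∂μ + ∫ ω, ⨆ i, X i ω ∂μ := by
    rw [integral_finsetSum _ fun i _ => hU i, Finset.mul_sum]
    calc ∑ i, ∫ ω, U i ω ∂μ ≤ ∑ i, (θ * ∫ ω, U i ω ∂μ + ∫ ω, (A i)ᶜ.indicator (U i) ω ∂μ) :=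
          Finset.sum_le_sum fun i _ => hsplit i
      _ = ∑ i, θ * ∫ ω, U i ω ∂μ + ∫ ω, ∑ i, (A i)ᶜ.indicator (U i) ω ∂μ := by
          rw [Finset.sum_add_distrib, integral_finsetSum _ fun i _ => hAU i]
      _ ≤ ∑ i, θ * ∫ ω, U i ω ∂μ + ∫ ω, ⨆ i, X i ω ∂μ :=
          add_le_add_right (integral_mono (integrable_finsetSum _ fun i _ => hAU i) hM hfirst) _
  linarith

theorem iIndepFun.integral_sum_indicator_le (hX : iIndepFun X μ)
    (hXm : ∀ i, Measurable (X i)) (hX0 : ∀ i ω, 0 ≤ X i ω)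
    (hM : Integrable (fun ω => ⨆ i, X i ω) μ) {τ : ℝ} (hτ : 0 < τ)
    (hτM : 4 * ∫ ω, ⨆ i, X i ω ∂μ ≤ τ) :
    ∫ ω, ∑ i, {ω | τ < X i ω}.indicator (X i) ω ∂μ ≤ 4 / 3 * ∫ ω, ⨆ i, X i ω ∂μ := by
  have : IsProbabilityMeasure μ := hX.isProbabilityMeasure
  have hmarkov := mul_meas_ge_le_integral_of_nonneg
    (.of_forall fun ω => Real.iSup_nonneg fun i => hX0 i ω) hM τ
  have hθ : μ.real {ω | τ < ⨆ i, X i ω} ≤ μ.real {ω | τ ≤ ⨆ i, X i ω} :=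
    measureReal_mono fun _ h => le_of_lt (a := τ) h
  have hθ4 : μ.real {ω | τ < ⨆ i, X i ω} ≤ 1 / 4 := by
    by_contra! h
    nlinarith [mul_le_mul_of_nonneg_left hθ hτ.le]
  have hT0 : 0 ≤ ∫ ω, ∑ i, {ω | τ < X i ω}.indicator (X i) ω ∂μ :=
    integral_nonneg fun ω => Finset.sum_nonneg fun i _ =>
      Set.indicator_nonneg (fun ω _ => hX0 i ω) ω
  have := hX.one_sub_measureReal_mul_integral_sum_indicator_le hXm hX0 hM τ
  nlinarith [mul_le_mul_of_nonneg_right hθ4 hT0]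

end Exceedances

section RandomVectors

variable {ι κ : Type*} [Fintype ι] [Fintype κ] [Nonempty κ] {V : ι → Ω → κ → ℝ}

theorem integral_iSup_sum_min_le (hV : iIndepFun V μ) (hVm : ∀ i, Measurable (V i))
    (hV0 : ∀ i ω j, 0 ≤ V i ω j) (hS : ∀ j, Integrable (fun ω => ∑ i, V i ω j) μ)
    {τ : ℝ} (hτ : 0 < τ) :
    ∫ ω, ⨆ j, ∑ i, min (V i ω j) τ ∂μ
      ≤ τ * log (Fintype.card κ) + (exp 1 - 1) * (⨆ j, ∫ ω, ∑ i, V i ω j ∂μ) := by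
  have : IsProbabilityMeasure μ := hV.isProbabilityMeasure
  have hmin : ∀ i, Measurable fun ω j => min (V i ω j) τ := fun i =>
    measurable_pi_lambda _ fun j => ((measurable_pi_apply j).comp (hVm i)).min measurable_const
  have hW : iIndepFun (fun i ω j => min (V i ω j) τ) μ := hV.comp (fun _ v j => min (v j) τ)
    fun _ => measurable_pi_lambda _ fun j => (measurable_pi_apply j).min measurable_const
  have hWτ : ∀ j, Integrable (fun ω => ∑ i, min (V i ω j) τ) μ := fun j =>
    integrable_finsetSum _ fun i _ => .of_mem_Icc 0 τ
      ((measurable_pi_apply j).comp (hmin i)).aemeasurable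
      (.of_forall fun ω => ⟨le_min (hV0 i ω j) hτ.le, min_le_right _ _⟩)
  refine (hW.integral_iSup_sum_le_of_bounded hτ hmin (fun i ω j => le_min (hV0 i ω j) hτ.le)
    fun i ω j => min_le_right _ _).trans ?_
  have he : 0 ≤ exp 1 - 1 := by linarith [add_one_le_exp 1]
  exact add_le_add_right (mul_le_mul_of_nonneg_left (ciSup_mono (Finite.bddAbove_range _)
    fun j => integral_mono (hWτ j) (hS j) fun ω => Finset.sum_le_sum fun i _ => min_le_left _ _)
    he) _

theorem integral_iSup_sum_le_add_integral_sum_indicator (hV : iIndepFun V μ)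
    (hVm : ∀ i, Measurable (V i)) (hV0 : ∀ i ω j, 0 ≤ V i ω j)
    (hZ : Integrable (fun ω => ⨆ j, ∑ i, V i ω j) μ) {τ : ℝ} (hτ : 0 < τ) :
    ∫ ω, ⨆ j, ∑ i, V i ω j ∂μ
      ≤ τ * log (Fintype.card κ) + (exp 1 - 1) * (⨆ j, ∫ ω, ∑ i, V i ω j ∂μ)
        + ∫ ω, ∑ i, {ω | τ < ⨆ j, V i ω j}.indicator (fun ω => ⨆ j, V i ω j) ω ∂μ := by
  have hVjm : ∀ i j, Measurable fun ω => V i ω j := fun i j =>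
    (measurable_pi_apply j).comp (hVm i)
  have hSZ : ∀ j ω, ∑ i, V i ω j ≤ ⨆ j, ∑ i, V i ω j := fun j ω =>
    le_ciSup (Finite.bddAbove_range fun j => ∑ i, V i ω j) j
  have hdom : ∀ f : Ω → ℝ, Measurable f → (∀ ω, 0 ≤ f ω) →
      (∀ ω, f ω ≤ ⨆ j, ∑ i, V i ω j) → Integrable f μ := fun f hf h0 hle =>
    integrable_of_le_of_le hf.aestronglyMeasurable (.of_forall h0) (.of_forall hle)
      (integrable_zero _ _ _) hZ
  have hsupint : Integrable (fun ω => ⨆ j, ∑ i, min (V i ω j) τ) μ :=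
    hdom _ (.iSup fun j => Finset.measurable_sum _ fun i _ => (hVjm i j).min measurable_const)
      (fun ω => Real.iSup_nonneg fun j => Finset.sum_nonneg fun i _ => le_min (hV0 i ω j) hτ.le)
      fun ω => ciSup_le fun j =>
        (Finset.sum_le_sum fun i _ => min_le_left _ _).trans (hSZ j ω)
  have hTint : Integrable
      (fun ω => ∑ i, {ω | τ < ⨆ j, V i ω j}.indicator (fun ω => ⨆ j, V i ω j) ω) μ :=
    integrable_finsetSum _ fun i _ =>
      (hdom _ (.iSup (hVjm i)) (fun ω => Real.iSup_nonneg fun j => hV0 i ω j) fun ω =>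
        (le_ciSup (Finite.bddAbove_range fun i => ⨆ j, V i ω j) i).trans
          (iSup_iSup_le_iSup_sum fun i j => hV0 i ω j)).indicator
        (measurableSet_lt measurable_const (.iSup (hVjm i)))
  have hS : ∀ j, Integrable (fun ω => ∑ i, V i ω j) μ := fun j =>
    hdom _ (Finset.measurable_sum _ fun i _ => hVjm i j)
      (fun ω => Finset.sum_nonneg fun i _ => hV0 i ω j) (hSZ j)
  calc ∫ ω, ⨆ j, ∑ i, V i ω j ∂μ
      ≤ ∫ ω, (⨆ j, ∑ i, min (V i ω j) τ)
          + ∑ i, {ω | τ < ⨆ j, V i ω j}.indicator (fun ω => ⨆ j, V i ω j) ω ∂μ :=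
        integral_mono hZ (hsupint.add hTint) fun ω =>
          iSup_sum_le_iSup_sum_min_add_sum_ite (v := fun i j => V i ω j) hτ.le
    _ ≤ _ := by
        rw [integral_add hsupint hTint]
        gcongr
        exact integral_iSup_sum_min_le hV hVm hV0 hS hτ

theorem integral_iSup_sum_le_of_integrable [LinearOrder ι] (hV : iIndepFun V μ)
    (hVm : ∀ i, Measurable (V i)) (hV0 : ∀ i ω j, 0 ≤ V i ω j)
    (hZ : Integrable (fun ω => ⨆ j, ∑ i, V i ω j) μ) :
    ∫ ω, ⨆ j, ∑ i, V i ω j ∂μ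
      ≤ 4 * (∫ ω, ⨆ i, ⨆ j, V i ω j ∂μ) * log (Fintype.card κ)
        + (exp 1 - 1) * (⨆ j, ∫ ω, ∑ i, V i ω j ∂μ) + 4 / 3 * ∫ ω, ⨆ i, ⨆ j, V i ω j ∂μ := by
  set m := ∫ ω, ⨆ i, ⨆ j, V i ω j ∂μ
  have hMm : ∀ i, Measurable fun ω => ⨆ j, V i ω j := fun i =>
    .iSup fun j => (measurable_pi_apply j).comp (hVm i)
  have hM : iIndepFun (fun i ω => ⨆ j, V i ω j) μ :=
    hV.comp (fun _ v => ⨆ j, v j) fun _ => .iSup measurable_pi_apply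
  have hM0 : ∀ i ω, 0 ≤ ⨆ j, V i ω j := fun i ω => Real.iSup_nonneg fun j => hV0 i ω j
  have hMint : Integrable (fun ω => ⨆ i, ⨆ j, V i ω j) μ :=
    integrable_of_le_of_le (Measurable.iSup hMm).aestronglyMeasurable
      (.of_forall fun ω => Real.iSup_nonneg fun i => hM0 i ω)
      (.of_forall fun ω => iSup_iSup_le_iSup_sum fun i j => hV0 i ω j) (integrable_zero _ _ _) hZ
  have hm0 : 0 ≤ m := integral_nonneg fun ω => Real.iSup_nonneg fun i => hM0 i ω
  have hlog : 0 ≤ log (Fintype.card κ) := log_natCast_nonneg _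
  -- `τ = 4 m + δ` rather than `4 m`, which would be `0` when `m = 0`
  have hδ : ∀ δ > 0, ∫ ω, ⨆ j, ∑ i, V i ω j ∂μ
      ≤ (4 * m + δ) * log (Fintype.card κ) + (exp 1 - 1) * (⨆ j, ∫ ω, ∑ i, V i ω j ∂μ)
        + 4 / 3 * m := fun δ hδ =>
    (integral_iSup_sum_le_add_integral_sum_indicator hV hVm hV0 hZ (by positivity)).trans
      (add_le_add_right (hM.integral_sum_indicator_le hMm hM0 hMint (by positivity)
        (by linarith)) _)
  refine le_of_forall_pos_le_add fun ε hε => ?_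
  have h := hδ (ε / (log (Fintype.card κ) + 1)) (by positivity)
  have hε' : ε / (log (Fintype.card κ) + 1) * log (Fintype.card κ) ≤ ε := by
    rw [div_mul_eq_mul_div, div_le_iff₀ (by positivity)]
    nlinarith
  nlinarith

end RandomVectors

end ProbabilityTheory

/-- Maximal inequality for sums of independent nonnegative random vectors in
`ℝ^p`, `p ≥ 2`, with a universal constant `K`. -/
theorem maximal_inequality_nonneg :
    ∃ K : ℝ, 0 < K ∧
      ∀ (Ω : Type) (_ : MeasurableSpace Ω) (P : Measure Ω), IsProbabilityMeasure P →
      ∀ (n p : ℕ), 2 ≤ p →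
      ∀ (V : Fin n → Ω → Fin p → ℝ), (∀ i, Measurable (V i)) →
      iIndepFun V P →
      (∀ i ω j, 0 ≤ V i ω j) →
      (∫ ω, (⨆ j, ∑ i, V i ω j) ∂P)
        ≤ K * ((⨆ j, ∫ ω, ∑ i, V i ω j ∂P)
            + (∫ ω, (⨆ i, ⨆ j, V i ω j) ∂P) * Real.log p) := by
  refine ⟨7, by norm_num, fun Ω _ P _ n p hp V hVm hV hV0 => ?_⟩
  have : Nonempty (Fin p) := ⟨⟨0, by omega⟩⟩
  have hlog : 1 / 2 ≤ log p := by
    have : log 2 ≤ log p := log_le_log two_pos (by exact_mod_cast hp)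
    linarith [log_two_gt_d9]
  have hL : 0 ≤ ⨆ j, ∫ ω, ∑ i, V i ω j ∂P :=
    Real.iSup_nonneg fun j => integral_nonneg fun ω => Finset.sum_nonneg fun i _ => hV0 i ω j
  have hm : 0 ≤ ∫ ω, ⨆ i, ⨆ j, V i ω j ∂P :=
    integral_nonneg fun ω => Real.iSup_nonneg fun i => Real.iSup_nonneg fun j => hV0 i ω j
  by_cases hZ : Integrable (fun ω => ⨆ j, ∑ i, V i ω j) P
  · have h := integral_iSup_sum_le_of_integrable hV hVm hV0 hZ
    rw [Fintype.card_fin] at h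
    nlinarith [exp_one_lt_d9]
  · rw [integral_undef hZ]
    positivity
end

section
/- (Maximal inequality for centered sums) Let Z₁,…,Z_n be independent random vectors in ℝ^p with p ≥ 2, M = max_{i,j} |Z_{ij}| and σ² = max_{1≤j≤p} ∑_{i=1}^n E[Z_{ij}²]. Then E[max_{1≤j≤p} |∑_{i=1}^n (Z_{ij} − E[Z_{ij}])|] ≤ K (σ √(log p) + √(E[M²]) · log p) for some universal constant K. -/
/-!
Truncate every coordinate at the level `τ = √(2 E M²)`. The truncated and recentred summands
are bounded by `2τ`, so Bernstein's bound on their moment generating functions, the soft-max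
inequality `exp (t maxⱼ |Sⱼ|) ≤ ∑ⱼ (exp (t Sⱼ) + exp (-t Sⱼ))` and Jensen give
`E maxⱼ |Sⱼ| ≤ (log (2p) + t² σ²) / t`, which for the best admissible `t` is at most
`2 √(σ² log (2p)) + 4τ log (2p)`.

The truncation error in row `i` is dominated by `Mᵢ 1{Mᵢ ≥ τ}` with `Mᵢ = maxⱼ |Zᵢⱼ|`. By
Chebyshev all `Mᵢ` stay below `τ` with probability at least `1/2`; by independence the event that
all rows but the `i`-th do so is independent of row `i`, which gives the Hoffmann-Jørgensen type
bound `∑ᵢ E[Mᵢ; Mᵢ ≥ τ] ≤ 2 E[M; M ≥ τ] ≤ 2 E M² / τ`.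
-/

open MeasureTheory ProbabilityTheory Real Finset

section Finite

variable {κ : Type*} [Fintype κ]

lemma abs_iSup_le_sum_abs (x : κ → ℝ) : |⨆ j, x j| ≤ ∑ j, |x j| := by
  cases isEmpty_or_nonempty κ
  · simp
  have hsum : ∀ j, |x j| ≤ ∑ j, |x j| := fun j =>
    single_le_sum (fun k _ => abs_nonneg (x k)) (mem_univ j)
  obtain ⟨j₀⟩ := ‹Nonempty κ›
  rw [abs_le]
  exact ⟨(neg_le.2 ((neg_le_abs _).trans (hsum j₀))).trans (le_ciSup (Finite.bddAbove_range x) j₀),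
    ciSup_le fun j => (le_abs_self _).trans (hsum j)⟩

lemma sq_iSup_le_sum_sq (x : κ → ℝ) : (⨆ j, x j) ^ 2 ≤ ∑ j, x j ^ 2 := by
  cases isEmpty_or_nonempty κ
  · simp
  obtain ⟨j₀, hj₀⟩ := exists_eq_ciSup_of_finite (f := x)
  rw [← hj₀]
  exact single_le_sum (fun k _ => sq_nonneg (x k)) (mem_univ j₀)

lemma iSup_abs_add_le (x y : κ → ℝ) :
    ⨆ j, |x j + y j| ≤ (⨆ j, |x j|) + ⨆ j, |y j| :=
  Real.iSup_le (fun j => (abs_add_le _ _).trans (add_le_add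
      (le_ciSup (f := fun j => |x j|) (Finite.bddAbove_range _) j)
      (le_ciSup (f := fun j => |y j|) (Finite.bddAbove_range _) j)))
    (add_nonneg (Real.iSup_nonneg fun _ => abs_nonneg _) (Real.iSup_nonneg fun _ => abs_nonneg _))

lemma exp_mul_iSup_abs_le_sum [Nonempty κ] (t : ℝ) (x : κ → ℝ) :
    exp (t * ⨆ j, |x j|) ≤ ∑ j, (exp (t * x j) + exp (-t * x j)) := by
  obtain ⟨j₀, hj₀⟩ := exists_eq_ciSup_of_finite (f := fun j => |x j|)
  rw [← hj₀]
  refine le_trans ?_ (single_le_sum (f := fun j => exp (t * x j) + exp (-t * x j))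
    (fun j _ => by positivity) (mem_univ j₀))
  rcases abs_cases (x j₀) with ⟨h, -⟩ | ⟨h, -⟩ <;> rw [h]
  · exact le_add_of_nonneg_right (exp_nonneg _)
  · rw [mul_neg, ← neg_mul]; exact le_add_of_nonneg_left (exp_nonneg _)

end Finite

section Integrability

variable {Ω κ : Type*} [MeasurableSpace Ω] {P : Measure Ω} [Fintype κ]

lemma integrable_iSup {f : κ → Ω → ℝ} (hf : ∀ j, Integrable (f j) P) :
    Integrable (fun ω => ⨆ j, f j ω) P :=
  (integrable_finsetSum univ fun j _ => (hf j).abs).mono'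
    (AEMeasurable.iSup fun j => (hf j).aemeasurable).aestronglyMeasurable
    (Filter.Eventually.of_forall fun _ => abs_iSup_le_sum_abs _)

lemma integrable_sq_iSup {f : κ → Ω → ℝ} (hf : ∀ j, Measurable (f j))
    (hf2 : ∀ j, Integrable (fun ω => f j ω ^ 2) P) :
    Integrable (fun ω => (⨆ j, f j ω) ^ 2) P :=
  (integrable_finsetSum _ fun j _ => hf2 j).mono'
    ((Measurable.iSup hf).pow_const 2).aestronglyMeasurable
    (.of_forall fun ω => by
      rw [Real.norm_eq_abs, abs_of_nonneg (sq_nonneg _)]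
      exact sq_iSup_le_sum_sq _)

lemma integral_iSup_abs_add_le {f g : κ → Ω → ℝ} (hf : ∀ j, Integrable (f j) P)
    (hg : ∀ j, Integrable (g j) P) :
    ∫ ω, ⨆ j, |f j ω + g j ω| ∂P ≤ ∫ ω, ⨆ j, |f j ω| ∂P + ∫ ω, ⨆ j, |g j ω| ∂P := by
  have hf' := integrable_iSup fun j => (hf j).abs
  have hg' := integrable_iSup fun j => (hg j).abs
  rw [← integral_add hf' hg']
  exact integral_mono_of_nonneg (.of_forall fun ω => Real.iSup_nonneg fun _ => abs_nonneg _)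
    (hf'.add hg') (.of_forall fun ω => iSup_abs_add_le _ _)

end Integrability

section Optimization

lemma exists_pos_mul_le_one_and_div_le {L V c : ℝ} (hL : 0 < L) (hV : 0 ≤ V) (hc : 0 < c) :
    ∃ t, 0 < t ∧ t * c ≤ 1 ∧ (L + t ^ 2 * V) / t ≤ 2 * √(L * V) + 2 * c * L := by
  rcases le_or_gt (c ^ 2 * L) V with hcV | hVc
  · have hVpos : 0 < V := lt_of_lt_of_le (by positivity) hcV
    refine ⟨√L / √V, by positivity, ?_, ?_⟩
    · rw [div_mul_eq_mul_div, div_le_one (sqrt_pos.2 hVpos), ← sqrt_sq hc.le, ← sqrt_mul hL.le,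
        mul_comm]
      exact sqrt_le_sqrt hcV
    · have hL' : 0 < √L := sqrt_pos.2 hL
      have hV' : 0 < √V := sqrt_pos.2 hVpos
      have heq : (L + (√L / √V) ^ 2 * V) / (√L / √V) = 2 * √(L * V) := by
        rw [div_pow, sq_sqrt hL.le, sq_sqrt hV, sqrt_mul hL.le]
        field_simp
        rw [sq_sqrt hL.le]
        ring
      rw [heq]
      nlinarith [mul_pos hL hc]
  · refine ⟨1 / c, by positivity, by field_simp; rfl, ?_⟩
    field_simp
    nlinarith [sqrt_nonneg (L * V)]

lemma le_add_mul_sqrt_of_forall_sq_le {X A L m : ℝ} (hL : 0 < L) (hm : 0 ≤ m)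
    (h : ∀ τ, 0 < τ → 2 * m ≤ τ ^ 2 → X ≤ A + 4 * τ * L + 4 * m / τ) :
    X ≤ A + (4 * L + 2) * √(2 * m) := by
  rcases hm.eq_or_lt with rfl | hm
  · rw [mul_zero, sqrt_zero, mul_zero, add_zero]
    refine le_of_forall_pos_le_add fun ε hε => (h (ε / (4 * L)) (by positivity)
      (by rw [mul_zero]; positivity)).trans_eq ?_
    field_simp
    ring
  · have hτ : 0 < √(2 * m) := sqrt_pos.2 (by linarith)
    have hτ2 : √(2 * m) ^ 2 = 2 * m := sq_sqrt (by linarith)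
    refine (h _ hτ hτ2.ge).trans_eq ?_
    field_simp
    linear_combination (-2 : ℝ) * hτ2

end Optimization

section Bernstein

variable {Ω : Type*} [MeasurableSpace Ω] {P : Measure Ω} [IsProbabilityMeasure P]

lemma mgf_le_exp_mul_integral_sq {X : Ω → ℝ} (hX : Measurable X) {c t : ℝ}
    (hb : ∀ ω, |X ω| ≤ c) (h0 : ∫ ω, X ω ∂P = 0) (htc : |t| * c ≤ 1) :
    mgf X P t ≤ exp (t ^ 2 * ∫ ω, X ω ^ 2 ∂P) := by
  have hXint : Integrable X P :=
    .of_bound hX.aestronglyMeasurable c (.of_forall hb)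
  have hX2int : Integrable (fun ω => X ω ^ 2) P :=
    .of_bound (hX.pow_const 2).aestronglyMeasurable (c ^ 2) (.of_forall fun ω => by
      simpa only [norm_pow, Real.norm_eq_abs] using pow_le_pow_left₀ (abs_nonneg _) (hb ω) 2)
  have htX : ∀ ω, |t * X ω| ≤ 1 := fun ω => by
    rw [abs_mul]; exact (mul_le_mul_of_nonneg_left (hb ω) (abs_nonneg t)).trans htc
  have hexp : Integrable (fun ω => exp (t * X ω)) P :=
    .of_bound (hX.const_mul t).exp.aestronglyMeasurable (exp 1) (.of_forall fun ω => by
      rw [Real.norm_eq_abs, abs_exp]; exact exp_le_exp.2 ((le_abs_self _).trans (htX ω)))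
  have hquad : Integrable (fun ω => 1 + t * X ω + t ^ 2 * X ω ^ 2) P :=
    ((integrable_const 1).add (hXint.const_mul t)).add (hX2int.const_mul (t ^ 2))
  calc mgf X P t ≤ ∫ ω, (1 + t * X ω + t ^ 2 * X ω ^ 2) ∂P := by
        refine integral_mono hexp hquad fun ω => ?_
        have := abs_le.1 (abs_exp_sub_one_sub_id_le (htX ω))
        dsimp only
        linarith [this.2, mul_pow t (X ω) 2]
    _ = 1 + t ^ 2 * ∫ ω, X ω ^ 2 ∂P := by
        rw [integral_add (f := fun ω => 1 + t * X ω) ((integrable_const 1).add (hXint.const_mul t))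
            (hX2int.const_mul _), integral_add (f := fun _ => (1 : ℝ)) (integrable_const 1)
            (hXint.const_mul t), integral_const_mul,
          integral_const_mul, h0]
        simp
    _ ≤ exp (t ^ 2 * ∫ ω, X ω ^ 2 ∂P) := by linarith [add_one_le_exp (t ^ 2 * ∫ ω, X ω ^ 2 ∂P)]

lemma mgf_sum_le_exp_mul_sum_integral_sq {ι : Type*} [Fintype ι] {X : ι → Ω → ℝ}
    (hX : ∀ i, Measurable (X i)) (hind : iIndepFun X P) {c t : ℝ} (hb : ∀ i ω, |X i ω| ≤ c)
    (h0 : ∀ i, ∫ ω, X i ω ∂P = 0) (htc : |t| * c ≤ 1) :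
    mgf (∑ i, X i) P t ≤ exp (t ^ 2 * ∑ i, ∫ ω, X i ω ^ 2 ∂P) := by
  rw [hind.mgf_sum hX, mul_sum, exp_sum]
  exact prod_le_prod (fun _ _ => mgf_nonneg) fun i _ =>
    mgf_le_exp_mul_integral_sq (hX i) (hb i) (h0 i) htc

lemma integral_iSup_abs_le_of_mgf_le {κ : Type*} [Fintype κ] [Nonempty κ] {S : κ → Ω → ℝ}
    (hS : ∀ j, Measurable (S j)) {t a : ℝ} (ht : 0 < t)
    (hint : ∀ j, Integrable (fun ω => exp (t * S j ω)) P ∧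
      Integrable (fun ω => exp (-t * S j ω)) P)
    (hmgf : ∀ j, mgf (S j) P t ≤ exp a ∧ mgf (S j) P (-t) ≤ exp a) :
    ∫ ω, ⨆ j, |S j ω| ∂P ≤ (log (2 * Fintype.card κ) + a) / t := by
  set F : Ω → ℝ := fun ω => ⨆ j, |S j ω|
  set G : Ω → ℝ := fun ω => ∑ j, (exp (t * S j ω) + exp (-t * S j ω))
  have hFm : Measurable F := Measurable.iSup fun j => (hS j).abs
  have hGint : Integrable G P := integrable_finsetSum _ fun j _ => (hint j).1.add (hint j).2
  have hFG : ∀ ω, exp (t * F ω) ≤ G ω := fun ω => exp_mul_iSup_abs_le_sum t _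
  have hexpF : Integrable (fun ω => exp (t * F ω)) P :=
    hGint.mono' (hFm.const_mul t).exp.aestronglyMeasurable
      (.of_forall fun ω => by rw [Real.norm_eq_abs, abs_exp]; exact hFG ω)
  -- `t F ≤ exp (t F)` makes `F` integrable as well
  have hFint : Integrable F P := by
    refine (hexpF.div_const t).mono' hFm.aestronglyMeasurable (.of_forall fun ω => ?_)
    have hF0 : 0 ≤ F ω := Real.iSup_nonneg fun _ => abs_nonneg _
    rw [Real.norm_eq_abs, abs_of_nonneg hF0, le_div_iff₀ ht, mul_comm]
    linarith [add_one_le_exp (t * F ω)]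
  have hjensen : exp (t * ∫ ω, F ω ∂P) ≤ ∫ ω, exp (t * F ω) ∂P := by
    have := convexOn_exp.map_integral_le continuous_exp.continuousOn isClosed_univ
      (.of_forall fun _ => Set.mem_univ _) (hFint.const_mul t) hexpF
    rwa [integral_const_mul] at this
  have hGle : ∫ ω, G ω ∂P ≤ 2 * Fintype.card κ * exp a := by
    calc ∫ ω, G ω ∂P = ∑ j, (mgf (S j) P t + mgf (S j) P (-t)) := by
          rw [integral_finsetSum (f := fun j ω => exp (t * S j ω) + exp (-t * S j ω)) _
            fun j _ => (hint j).1.add (hint j).2]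
          exact sum_congr rfl fun j _ => integral_add (hint j).1 (hint j).2
      _ ≤ ∑ _j : κ, (exp a + exp a) := sum_le_sum fun j _ => add_le_add (hmgf j).1 (hmgf j).2
      _ = 2 * Fintype.card κ * exp a := by rw [sum_const, card_univ, nsmul_eq_mul]; ring
  have hlog : t * ∫ ω, F ω ∂P ≤ log (2 * Fintype.card κ) + a := by
    rw [← log_exp a, ← log_mul (by positivity) (exp_pos a).ne', le_log_iff_exp_le (by positivity)]
    exact hjensen.trans ((integral_mono hexpF hGint hFG).trans hGle)
  rwa [le_div_iff₀ ht, mul_comm]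

variable {ι κ : Type*} [Fintype ι] [Fintype κ] [Nonempty κ]

lemma integral_iSup_abs_sum_le_of_mul_le_one {Y : ι → Ω → κ → ℝ} (hY : ∀ i, Measurable (Y i))
    (hind : iIndepFun Y P) {c V t : ℝ} (hb : ∀ i ω j, |Y i ω j| ≤ c)
    (h0 : ∀ i j, ∫ ω, Y i ω j ∂P = 0) (hV : ∀ j, ∑ i, ∫ ω, Y i ω j ^ 2 ∂P ≤ V)
    (ht : 0 < t) (htc : t * c ≤ 1) :
    ∫ ω, ⨆ j, |∑ i, Y i ω j| ∂P ≤ (log (2 * Fintype.card κ) + t ^ 2 * V) / t := by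
  have hYj : ∀ i j, Measurable fun ω => Y i ω j := fun i j => (measurable_pi_apply j).comp (hY i)
  have hSb : ∀ j ω, |∑ i, Y i ω j| ≤ Fintype.card ι * c := fun j ω =>
    (abs_sum_le_sum_abs _ _).trans <| by
      simpa [sum_const, card_univ, nsmul_eq_mul] using sum_le_sum fun i (_ : i ∈ univ) => hb i ω j
  have hint : ∀ j (s : ℝ), |s| = t → Integrable (fun ω => exp (s * ∑ i, Y i ω j)) P :=
    fun j s hs =>
      .of_bound ((measurable_sum _ fun i _ => hYj i j).const_mul s).exp.aestronglyMeasurable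
      (exp (t * (Fintype.card ι * c))) (.of_forall fun ω => by
        rw [Real.norm_eq_abs, abs_exp, exp_le_exp, ← hs]
        exact (le_abs_self _).trans ((abs_mul _ _).trans_le
          (mul_le_mul_of_nonneg_left (hSb j ω) (abs_nonneg s))))
  have hmgf : ∀ j (s : ℝ), |s| = t → mgf (fun ω => ∑ i, Y i ω j) P s ≤ exp (t ^ 2 * V) := by
    intro j s hs
    have hsum : (fun ω => ∑ i, Y i ω j) = ∑ i, fun ω => Y i ω j := by ext; simp
    rw [hsum, ← hs, sq_abs]
    refine (mgf_sum_le_exp_mul_sum_integral_sq (hYj · j)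
      (hind.comp (fun _ v => v j) fun _ => measurable_pi_apply j) (fun i ω => hb i ω j)
      (h0 · j) (by rwa [hs])).trans ?_
    exact exp_le_exp.2 (mul_le_mul_of_nonneg_left (hV j) (sq_nonneg s))
  exact integral_iSup_abs_le_of_mgf_le (fun j => measurable_sum _ fun i _ => hYj i j) ht
    (fun j => ⟨hint j t (abs_of_pos ht), hint j (-t) (by rw [abs_neg, abs_of_pos ht])⟩)
    (fun j => ⟨hmgf j t (abs_of_pos ht), hmgf j (-t) (by rw [abs_neg, abs_of_pos ht])⟩)

lemma integral_iSup_abs_sum_le_two_sqrt_add {Y : ι → Ω → κ → ℝ} (hY : ∀ i, Measurable (Y i))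
    (hind : iIndepFun Y P) {c V : ℝ} (hc : 0 < c) (hb : ∀ i ω j, |Y i ω j| ≤ c)
    (h0 : ∀ i j, ∫ ω, Y i ω j ∂P = 0) (hV : ∀ j, ∑ i, ∫ ω, Y i ω j ^ 2 ∂P ≤ V) :
    ∫ ω, ⨆ j, |∑ i, Y i ω j| ∂P ≤
      2 * √(log (2 * Fintype.card κ) * V) + 2 * c * log (2 * Fintype.card κ) := by
  have hL : 0 < log (2 * Fintype.card κ) :=
    log_pos (by linarith [(Nat.one_le_cast (α := ℝ)).2 (Fintype.card_pos (α := κ))])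
  have hV0 : 0 ≤ V := (sum_nonneg fun i _ => integral_nonneg fun ω => sq_nonneg _).trans
    (hV (Classical.arbitrary κ))
  obtain ⟨t, ht, htc, hbound⟩ := exists_pos_mul_le_one_and_div_le hL hV0 hc
  exact (integral_iSup_abs_sum_le_of_mul_le_one hY hind hb h0 hV ht htc).trans hbound

end Bernstein

section Tail

open Set

variable {ι : Type*} [Fintype ι]

lemma sum_indicator_mul_indicator_forall_ne_le {Ω : Type*} {τ : ℝ} (hτ : 0 ≤ τ)
    (W : ι → Ω → ℝ) (ω : Ω) :
    ∑ i, (Ici τ).indicator id (W i ω) * {ω | ∀ k ≠ i, W k ω < τ}.indicator 1 ω ≤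
      (Ici τ).indicator id (⨆ i, W i ω) := by
  have hrhs : 0 ≤ (Ici τ).indicator id (⨆ i, W i ω) :=
    indicator_apply_nonneg fun h => hτ.trans h
  by_cases hex : ∃ i, τ ≤ W i ω ∧ ∀ k ≠ i, W k ω < τ
  · obtain ⟨i₀, hi₀, hothers⟩ := hex
    have hle : W i₀ ω ≤ ⨆ i, W i ω := le_ciSup (f := fun i => W i ω) (Finite.bddAbove_range _) i₀
    rw [sum_eq_single_of_mem i₀ (mem_univ _) fun k _ hk => by
        rw [indicator_of_notMem (show W k ω ∉ Ici τ from not_le.2 (hothers k hk)), zero_mul],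
      indicator_of_mem (Set.mem_Ici.2 hi₀),
      indicator_of_mem (show ω ∈ {ω | ∀ k ≠ i₀, W k ω < τ} from hothers),
      indicator_of_mem (Set.mem_Ici.2 (hi₀.trans hle))]
    simpa using hle
  · push Not at hex
    refine (sum_eq_zero fun i _ => ?_).trans_le hrhs
    by_cases hi : τ ≤ W i ω
    · obtain ⟨k, hk, hkτ⟩ := hex i hi
      rw [indicator_of_notMem (show ω ∉ {ω | ∀ k ≠ i, W k ω < τ} from
        fun h => (h k hk).not_ge hkτ), mul_zero]
    · rw [indicator_of_notMem (show W i ω ∉ Ici τ from hi), zero_mul]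

variable {Ω : Type*} [MeasurableSpace Ω] {P : Measure Ω}

lemma ProbabilityTheory.iIndepFun.indepFun_indicator_forall_ne {W : ι → Ω → ℝ}
    (hind : iIndepFun W P) (hW : ∀ i, Measurable (W i)) (i : ι) {s : Set ℝ} (hs : MeasurableSet s) :
    IndepFun (W i) ({ω | ∀ k ≠ i, W k ω ∈ s}.indicator (1 : Ω → ℝ)) P := by
  classical
  have h := (hind.indepFun_finset {i} {i}ᶜ disjoint_compl_right hW).comp
    (measurable_pi_apply ⟨i, Finset.mem_singleton_self i⟩)
    ((measurable_const (a := (1 : ℝ))).indicator (by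
      rw [ofPred_forall]; exact .iInter fun k => measurable_pi_apply k hs) :
      Measurable ({v : ({i}ᶜ : Finset ι) → ℝ | ∀ k, v k ∈ s}.indicator 1))
  have hpre : {ω | ∀ k ≠ i, W k ω ∈ s} =
      (fun ω (k : ({i}ᶜ : Finset ι)) => W k ω) ⁻¹' {v | ∀ k, v k ∈ s} := by
    ext ω; simp
  rw [hpre]
  exact h

lemma integral_le_two_mul_integral_mul_indicator [IsProbabilityMeasure P] {f : Ω → ℝ}
    {A : Set Ω} (hf : Measurable f) (hA : MeasurableSet A) (hf0 : 0 ≤ f)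
    (hind : IndepFun f (A.indicator (1 : Ω → ℝ)) P) (hPA : 1 / 2 ≤ P.real A) :
    ∫ ω, f ω ∂P ≤ 2 * ∫ ω, f ω * A.indicator 1 ω ∂P := by
  rw [hind.integral_fun_mul_eq_mul_integral hf.aestronglyMeasurable
    (measurable_const.indicator hA).aestronglyMeasurable, integral_indicator_one hA]
  nlinarith [integral_nonneg (μ := P) hf0]

lemma sum_integral_indicator_Ici_le_two_mul [IsProbabilityMeasure P] {W : ι → Ω → ℝ}
    (hW : ∀ i, Measurable (W i)) (hind : iIndepFun W P) (hint : ∀ i, Integrable (W i) P)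
    {τ : ℝ} (hτ : 0 ≤ τ) (hhalf : 1 / 2 ≤ P.real {ω | ∀ i, W i ω < τ}) :
    ∑ i, ∫ ω, (Ici τ).indicator id (W i ω) ∂P ≤
      2 * ∫ ω, (Ici τ).indicator id (⨆ i, W i ω) ∂P := by
  set f : ι → Ω → ℝ := fun i ω => (Ici τ).indicator id (W i ω)
  set A : ι → Set Ω := fun i => {ω | ∀ k ≠ i, W k ω < τ}
  have hmeas_ind : Measurable ((Ici τ).indicator (id : ℝ → ℝ)) :=
    measurable_id.indicator measurableSet_Ici
  have hfm : ∀ i, Measurable (f i) := fun i => hmeas_ind.comp (hW i)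
  have hfint : ∀ i, Integrable (f i) P := fun i =>
    (hint i).mono (hfm i).aestronglyMeasurable (.of_forall fun ω => norm_indicator_le_norm_self _ _)
  have hAm : ∀ i, MeasurableSet (A i) := fun i => by
    simp only [A, ofPred_forall]
    exact .iInter fun k => .iInter fun _ => measurableSet_lt (hW k) measurable_const
  have hgm : ∀ i, Measurable ((A i).indicator (1 : Ω → ℝ)) := fun i =>
    measurable_const.indicator (hAm i)
  have hfgint : ∀ i, Integrable (fun ω => f i ω * (A i).indicator 1 ω) P := fun i =>
    (hfint i).mul_bdd (c := 1) (hgm i).aestronglyMeasurable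
      (.of_forall fun ω => (norm_indicator_le_norm_self _ _).trans (by simp))
  have hsingle : ∀ i, ∫ ω, f i ω ∂P ≤ 2 * ∫ ω, f i ω * (A i).indicator 1 ω ∂P := fun i =>
    integral_le_two_mul_integral_mul_indicator (hfm i) (hAm i)
      (fun ω => indicator_apply_nonneg fun h => hτ.trans h)
      ((hind.indepFun_indicator_forall_ne hW i measurableSet_Iio).comp hmeas_ind measurable_id)
      (hhalf.trans (measureReal_mono fun ω h k _ => h k))
  have hmax : Integrable (fun ω => (Ici τ).indicator id (⨆ i, W i ω)) P :=
    (integrable_iSup hint).mono (hmeas_ind.comp (Measurable.iSup hW)).aestronglyMeasurable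
      (.of_forall fun ω => norm_indicator_le_norm_self _ _)
  calc ∑ i, ∫ ω, f i ω ∂P ≤ ∑ i, 2 * ∫ ω, f i ω * (A i).indicator 1 ω ∂P :=
        sum_le_sum fun i _ => hsingle i
    _ = 2 * ∫ ω, ∑ i, f i ω * (A i).indicator 1 ω ∂P := by
        rw [← mul_sum, integral_finsetSum _ fun i _ => hfgint i]
    _ ≤ 2 * ∫ ω, (Ici τ).indicator id (⨆ i, W i ω) ∂P := by
        refine mul_le_mul_of_nonneg_left ?_ zero_le_two
        exact integral_mono (integrable_finsetSum _ fun i _ => hfgint i) hmax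
          fun ω => sum_indicator_mul_indicator_forall_ne_le hτ W ω

end Tail

section Moments

open Set

variable {Ω : Type*} [MeasurableSpace Ω] {P : Measure Ω}

lemma one_half_le_measureReal_lt [IsProbabilityMeasure P] {X : Ω → ℝ} (hX : Measurable X)
    (hX2 : Integrable (fun ω => X ω ^ 2) P) {τ : ℝ} (hτ : 0 < τ)
    (h : 2 * ∫ ω, X ω ^ 2 ∂P ≤ τ ^ 2) : 1 / 2 ≤ P.real {ω | X ω < τ} := by
  have hmarkov :=
    mul_meas_ge_le_integral_of_nonneg (.of_forall fun ω => sq_nonneg (X ω)) hX2 (τ ^ 2)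
  have hsub : {ω | X ω < τ}ᶜ ⊆ {ω | τ ^ 2 ≤ X ω ^ 2} := fun ω hω =>
    pow_le_pow_left₀ hτ.le (not_lt.1 hω) 2
  have hcompl := probReal_compl_eq_one_sub (μ := P) (s := {ω | X ω < τ})
    (measurableSet_lt hX measurable_const)
  have htail : P.real {ω | τ ^ 2 ≤ X ω ^ 2} ≤ 1 / 2 :=
    le_of_mul_le_mul_left (a := τ ^ 2) (by linarith) (by positivity)
  linarith [measureReal_mono (μ := P) hsub]

lemma integral_indicator_Ici_le {X : Ω → ℝ} (hX2 : Integrable (fun ω => X ω ^ 2) P) {τ : ℝ}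
    (hτ : 0 < τ) : ∫ ω, (Ici τ).indicator id (X ω) ∂P ≤ (∫ ω, X ω ^ 2 ∂P) / τ := by
  rw [← integral_div]
  refine integral_mono_of_nonneg (.of_forall fun ω => indicator_apply_nonneg fun h => hτ.le.trans h)
    (hX2.div_const τ) (.of_forall fun ω => ?_)
  dsimp only
  by_cases hx : τ ≤ X ω
  · rw [indicator_of_mem (show X ω ∈ Ici τ from hx), id, le_div_iff₀ hτ]
    nlinarith
  · rw [indicator_of_notMem (show X ω ∉ Ici τ from hx)]
    positivity

lemma sum_integral_indicator_Ici_le_of_sq_le [IsProbabilityMeasure P] {ι : Type*} [Fintype ι]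
    {W : ι → Ω → ℝ} (hW : ∀ i, Measurable (W i)) (hind : iIndepFun W P)
    (hint : ∀ i, Integrable (W i) P) (hW2 : Integrable (fun ω => (⨆ i, W i ω) ^ 2) P) {τ : ℝ}
    (hτ : 0 < τ) (hτ2 : 2 * ∫ ω, (⨆ i, W i ω) ^ 2 ∂P ≤ τ ^ 2) :
    ∑ i, ∫ ω, (Ici τ).indicator id (W i ω) ∂P ≤ 2 * (∫ ω, (⨆ i, W i ω) ^ 2 ∂P) / τ := by
  have hhalf : 1 / 2 ≤ P.real {ω | ∀ i, W i ω < τ} :=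
    (one_half_le_measureReal_lt (Measurable.iSup hW) hW2 hτ hτ2).trans
      (measureReal_mono fun ω h i =>
        (le_ciSup (f := fun i => W i ω) (Finite.bddAbove_range _) i).trans_lt h)
  rw [mul_div_assoc]
  exact (sum_integral_indicator_Ici_le_two_mul hW hind hint hτ.le hhalf).trans
    (mul_le_mul_of_nonneg_left (integral_indicator_Ici_le hW2 hτ) zero_le_two)

lemma integral_iSup_abs_sum_sub_integral_le_add [IsFiniteMeasure P] {ι κ : Type*} [Fintype ι]
    [Fintype κ]
    {X Y : ι → Ω → κ → ℝ} (hX : ∀ i j, Integrable (fun ω => X i ω j) P)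
    (hY : ∀ i j, Integrable (fun ω => Y i ω j) P) :
    ∫ ω, ⨆ j, |∑ i, (X i ω j - ∫ ω', X i ω' j ∂P)| ∂P ≤
      ∫ ω, ⨆ j, |∑ i, (Y i ω j - ∫ ω', Y i ω' j ∂P)| ∂P +
        ∫ ω, ⨆ j, |∑ i, ((X i ω j - Y i ω j) - ∫ ω', (X i ω' j - Y i ω' j) ∂P)| ∂P := by
  have hsplit : ∀ ω j, ∑ i, (X i ω j - ∫ ω', X i ω' j ∂P) =
      ∑ i, (Y i ω j - ∫ ω', Y i ω' j ∂P) +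
        ∑ i, ((X i ω j - Y i ω j) - ∫ ω', (X i ω' j - Y i ω' j) ∂P) := fun ω j => by
    rw [← sum_add_distrib]
    refine sum_congr rfl fun i _ => ?_
    rw [integral_sub (hX i j) (hY i j)]
    ring
  simp_rw [hsplit]
  exact integral_iSup_abs_add_le
    (fun j => integrable_finsetSum _ fun i _ => (hY i j).sub (integrable_const _))
    (fun j => integrable_finsetSum _ fun i _ => ((hX i j).sub (hY i j)).sub (integrable_const _))

lemma integral_iSup_abs_sum_sub_integral_le_of_abs_le [IsProbabilityMeasure P] {ι κ : Type*}
    [Fintype ι] [Nonempty κ] {R : ι → Ω → κ → ℝ} {B : ι → Ω → ℝ}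
    (hR : ∀ i j, Integrable (fun ω => R i ω j) P) (hB : ∀ i, Integrable (B i) P)
    (hRB : ∀ i ω j, |R i ω j| ≤ B i ω) :
    ∫ ω, ⨆ j, |∑ i, (R i ω j - ∫ ω', R i ω' j ∂P)| ∂P ≤ 2 * ∑ i, ∫ ω, B i ω ∂P := by
  have hB0 : ∀ i ω, 0 ≤ B i ω := fun i ω => (abs_nonneg _).trans (hRB i ω (Classical.arbitrary κ))
  have hmean : ∀ i j, |∫ ω', R i ω' j ∂P| ≤ ∫ ω, B i ω ∂P := fun i j =>
    abs_integral_le_integral_abs.trans (integral_mono (hR i j).abs (hB i) fun ω => hRB i ω j)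
  have hpt : ∀ ω, ⨆ j, |∑ i, (R i ω j - ∫ ω', R i ω' j ∂P)| ≤
      ∑ i, (B i ω + ∫ ω', B i ω' ∂P) := fun ω =>
    Real.iSup_le (fun j => (abs_sum_le_sum_abs _ _).trans (sum_le_sum fun i _ =>
        (abs_sub _ _).trans (add_le_add (hRB i ω j) (hmean i j))))
      (sum_nonneg fun i _ => add_nonneg (hB0 i ω) (integral_nonneg (hB0 i)))
  have hint : Integrable (fun ω => ∑ i, (B i ω + ∫ ω', B i ω' ∂P)) P :=
    integrable_finsetSum _ fun i _ => (hB i).add (integrable_const _)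
  refine (integral_mono_of_nonneg (.of_forall fun ω => Real.iSup_nonneg fun _ => abs_nonneg _)
    hint (.of_forall hpt)).trans_eq ?_
  rw [integral_finsetSum (f := fun i ω => B i ω + ∫ ω', B i ω' ∂P) _
    fun i _ => (hB i).add (integrable_const _), two_mul, ← sum_add_distrib]
  refine sum_congr rfl fun i _ => ?_
  rw [integral_add (hB i) (integrable_const _), integral_const, probReal_univ, one_smul]

end Moments

section Truncation

open Set

lemma indicator_Ici_id_le_indicator_Ici_id {τ x y : ℝ} (hτ : 0 ≤ τ) (hxy : x ≤ y) :
    (Ici τ).indicator id x ≤ (Ici τ).indicator id y := by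
  by_cases hx : τ ≤ x
  · rw [indicator_of_mem (show x ∈ Ici τ from hx),
      indicator_of_mem (show y ∈ Ici τ from hx.trans hxy)]
    exact hxy
  · rw [indicator_of_notMem (show x ∉ Ici τ from hx)]
    exact indicator_apply_nonneg fun h => hτ.trans h

lemma abs_sub_truncation_le {α : Type*} (f : α → ℝ) (τ : ℝ) (a : α) :
    |f a - truncation f τ a| ≤ (Ici τ).indicator id |f a| := by
  by_cases h : f a ∈ Ioc (-τ) τ
  · simp only [truncation, Function.comp_apply, indicator_of_mem h, id, sub_self, abs_zero]
    exact indicator_apply_nonneg fun _ => abs_nonneg _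
  · have hτa : τ ≤ |f a| := by
      rw [Set.mem_Ioc, not_and_or, not_lt, not_le] at h
      rcases h with h | h
      · exact le_abs.2 (Or.inr (le_neg.2 h))
      · exact le_abs.2 (Or.inl h.le)
    simp only [truncation, Function.comp_apply, indicator_of_notMem h, sub_zero,
      indicator_of_mem (show |f a| ∈ Ici τ from hτa), id, le_refl]

variable {Ω : Type*} [MeasurableSpace Ω] {P : Measure Ω} [IsProbabilityMeasure P]

lemma integral_sq_truncation_sub_integral_le {f : Ω → ℝ} (hf : Measurable f)
    (hf2 : Integrable (fun ω => f ω ^ 2) P) (τ : ℝ) :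
    ∫ ω, (truncation f τ ω - ∫ ω', truncation f τ ω' ∂P) ^ 2 ∂P ≤ ∫ ω, f ω ^ 2 ∂P := by
  have hT : Measurable (truncation f τ) := (measurable_id.indicator measurableSet_Ioc).comp hf
  rw [← variance_eq_integral hT.aemeasurable]
  refine (variance_le_expectation_sq hT.aestronglyMeasurable).trans (integral_mono
    (hf.aestronglyMeasurable.memLp_truncation (p := 2)).integrable_sq hf2 fun ω => ?_)
  exact sq_le_sq.2 (abs_truncation_le_abs_self f τ ω)

variable {ι κ : Type*} [Fintype ι] [Fintype κ] [Nonempty κ]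

lemma integral_iSup_abs_sum_truncation_sub_le {Z : ι → Ω → κ → ℝ} (hZ : ∀ i, Measurable (Z i))
    (hind : iIndepFun Z P) (hZ2 : ∀ i j, Integrable (fun ω => Z i ω j ^ 2) P) {V τ : ℝ}
    (hτ : 0 < τ) (hV : ∀ j, ∑ i, ∫ ω, Z i ω j ^ 2 ∂P ≤ V) :
    ∫ ω, ⨆ j, |∑ i, (truncation (fun ω => Z i ω j) τ ω -
        ∫ ω', truncation (fun ω => Z i ω j) τ ω' ∂P)| ∂P ≤
      2 * √(log (2 * Fintype.card κ) * V) + 4 * τ * log (2 * Fintype.card κ) := by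
  have hZj : ∀ i j, Measurable fun ω => Z i ω j := fun i j => (measurable_pi_apply j).comp (hZ i)
  have hmeas_trunc : Measurable ((Ioc (-τ) τ).indicator (id : ℝ → ℝ)) :=
    measurable_id.indicator measurableSet_Ioc
  have hbound : ∀ i j ω, |truncation (fun ω => Z i ω j) τ ω| ≤ τ := fun i j ω =>
    (abs_truncation_le_bound _ _ _).trans_eq (abs_of_pos hτ)
  have hmean : ∀ i j, |∫ ω, truncation (fun ω => Z i ω j) τ ω ∂P| ≤ τ := fun i j => by
    simpa using norm_integral_le_of_norm_le_const (μ := P)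
      (.of_forall fun ω => (Real.norm_eq_abs _).trans_le (hbound i j ω))
  have hint : ∀ i j, Integrable (truncation (fun ω => Z i ω j) τ) P := fun i j =>
    (hZj i j).aestronglyMeasurable.integrable_truncation
  have h := integral_iSup_abs_sum_le_two_sqrt_add (P := P)
    (Y := fun i ω j =>
      truncation (fun ω => Z i ω j) τ ω - ∫ ω', truncation (fun ω => Z i ω j) τ ω' ∂P)
    (fun i => measurable_pi_lambda _ fun j => (hmeas_trunc.comp (hZj i j)).sub_const _)
    (hind.comp _ fun i => measurable_pi_lambda _ fun j =>
      (hmeas_trunc.comp (measurable_pi_apply j)).sub_const _)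
    (by positivity : (0 : ℝ) < 2 * τ)
    (fun i ω j => (abs_sub _ _).trans (by linarith [hbound i j ω, hmean i j]))
    (fun i j => by rw [integral_sub (hint i j) (integrable_const _)]; simp)
    (fun j => (sum_le_sum fun i _ => integral_sq_truncation_sub_integral_le (hZj i j)
      (hZ2 i j) τ).trans (hV j))
  linarith

end Truncation

section MaximalInequality

open Set

variable {Ω : Type*} [MeasurableSpace Ω] {P : Measure Ω} [IsProbabilityMeasure P]
variable {ι κ : Type*} [Fintype ι] [Fintype κ] [Nonempty κ]

lemma integral_iSup_abs_sum_sub_integral_le_of_sq_le {Z : ι → Ω → κ → ℝ}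
    (hZ : ∀ i, Measurable (Z i)) (hind : iIndepFun Z P)
    (hZ2 : ∀ i j, Integrable (fun ω => Z i ω j ^ 2) P) {V τ : ℝ}
    (hV : ∀ j, ∑ i, ∫ ω, Z i ω j ^ 2 ∂P ≤ V) (hτ : 0 < τ)
    (hτ2 : 2 * ∫ ω, (⨆ i, ⨆ j, |Z i ω j|) ^ 2 ∂P ≤ τ ^ 2) :
    ∫ ω, ⨆ j, |∑ i, (Z i ω j - ∫ ω', Z i ω' j ∂P)| ∂P ≤
      2 * √(log (2 * Fintype.card κ) * V) + 4 * τ * log (2 * Fintype.card κ) +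
        4 * (∫ ω, (⨆ i, ⨆ j, |Z i ω j|) ^ 2 ∂P) / τ := by
  set T : ι → Ω → κ → ℝ := fun i ω j => truncation (fun ω => Z i ω j) τ ω
  set Mi : ι → Ω → ℝ := fun i ω => ⨆ j, |Z i ω j|
  have hZj : ∀ i j, Measurable fun ω => Z i ω j := fun i j => (measurable_pi_apply j).comp (hZ i)
  have hZint : ∀ i j, Integrable (fun ω => Z i ω j) P := fun i j =>
    ((memLp_two_iff_integrable_sq (hZj i j).aestronglyMeasurable).2 (hZ2 i j)).integrable
      one_le_two
  have hTint : ∀ i j, Integrable (fun ω => T i ω j) P := fun i j =>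
    (hZj i j).aestronglyMeasurable.integrable_truncation
  have hMim : ∀ i, Measurable (Mi i) := fun i => Measurable.iSup fun j => (hZj i j).abs
  have hMiint : ∀ i, Integrable (Mi i) P := fun i => integrable_iSup fun j => (hZint i j).abs
  have hremainder := integral_iSup_abs_sum_sub_integral_le_of_abs_le (P := P)
    (R := fun i ω j => Z i ω j - T i ω j) (B := fun i ω => (Ici τ).indicator id (Mi i ω))
    (fun i j => (hZint i j).sub (hTint i j))
    (fun i => (hMiint i).mono
      ((measurable_id.indicator measurableSet_Ici).comp (hMim i)).aestronglyMeasurable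
      (.of_forall fun ω => norm_indicator_le_norm_self _ _))
    (fun i ω j => (abs_sub_truncation_le (fun ω => Z i ω j) τ ω).trans
      (indicator_Ici_id_le_indicator_Ici_id hτ.le
        (le_ciSup (f := fun j => |Z i ω j|) (Finite.bddAbove_range _) j)))
  have htail : ∑ i, ∫ ω, (Ici τ).indicator id (Mi i ω) ∂P ≤
      2 * (∫ ω, (⨆ i, ⨆ j, |Z i ω j|) ^ 2 ∂P) / τ :=
    sum_integral_indicator_Ici_le_of_sq_le hMim
      (hind.comp (fun _ v => ⨆ j, |v j|) fun _ =>
        Measurable.iSup fun j => (measurable_pi_apply j).abs)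
      hMiint (integrable_sq_iSup hMim fun i => integrable_sq_iSup (fun j => (hZj i j).abs)
        fun j => by simpa only [sq_abs] using hZ2 i j) hτ hτ2
  have hbounded : ∫ ω, ⨆ j, |∑ i, (T i ω j - ∫ ω', T i ω' j ∂P)| ∂P ≤
      2 * √(log (2 * Fintype.card κ) * V) + 4 * τ * log (2 * Fintype.card κ) :=
    integral_iSup_abs_sum_truncation_sub_le hZ hind hZ2 hτ hV
  have hsplit := integral_iSup_abs_sum_sub_integral_le_add hZint hTint
  rw [mul_div_assoc] at htail ⊢
  linarith

theorem integral_iSup_abs_sum_sub_integral_le_sqrt {Z : ι → Ω → κ → ℝ}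
    (hZ : ∀ i, Measurable (Z i)) (hind : iIndepFun Z P)
    (hZ2 : ∀ i j, Integrable (fun ω => Z i ω j ^ 2) P) :
    ∫ ω, ⨆ j, |∑ i, (Z i ω j - ∫ ω', Z i ω' j ∂P)| ∂P ≤
      2 * √(log (2 * Fintype.card κ) * ⨆ j, ∑ i, ∫ ω, Z i ω j ^ 2 ∂P) +
        (4 * log (2 * Fintype.card κ) + 2) * √(2 * ∫ ω, (⨆ i, ⨆ j, |Z i ω j|) ^ 2 ∂P) :=
  le_add_mul_sqrt_of_forall_sq_le
    (log_pos (by linarith [(Nat.one_le_cast (α := ℝ)).2 (Fintype.card_pos (α := κ))]))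
    (integral_nonneg fun ω => sq_nonneg _) fun _ hτ hτ2 =>
      integral_iSup_abs_sum_sub_integral_le_of_sq_le hZ hind hZ2
        (fun j => le_ciSup (f := fun j => ∑ i, ∫ ω, Z i ω j ^ 2 ∂P) (Finite.bddAbove_range _) j)
        hτ hτ2

end MaximalInequality

lemma two_sqrt_log_mul_add_le {p : ℕ} (hp : 2 ≤ p) {V : ℝ} (hV : 0 ≤ V) (m : ℝ) :
    2 * √(log (2 * p) * V) + (4 * log (2 * p) + 2) * √(2 * m) ≤
      17 * (√V * √(log p) + √m * log p) := by
  have hp' : (2 : ℝ) ≤ p := by exact_mod_cast hp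
  have hlog2 : log 2 ≤ log p := log_le_log two_pos hp'
  have hlogp : 2 / 3 < log p := by linarith [log_two_gt_d9]
  have hL : log (2 * p) ≤ 2 * log p := by
    rw [log_mul two_ne_zero (by positivity)]; linarith
  have hsqrt2 : √2 ≤ 3 / 2 :=
    (sqrt_le_sqrt (by norm_num : (2 : ℝ) ≤ (3 / 2) ^ 2)).trans_eq (sqrt_sq (by norm_num))
  have h1 : √(log (2 * p) * V) ≤ 3 / 2 * (√V * √(log p)) :=
    calc √(log (2 * p) * V) ≤ √(2 * log p * V) :=
          sqrt_le_sqrt (mul_le_mul_of_nonneg_right hL hV)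
      _ = √2 * (√V * √(log p)) := by
          rw [sqrt_mul (by linarith), sqrt_mul (by norm_num)]; ring
      _ ≤ 3 / 2 * (√V * √(log p)) := by gcongr
  have h2 : (4 * log (2 * p) + 2) * √(2 * m) ≤ 11 * log p * (3 / 2 * √m) := by
    rw [sqrt_mul (by norm_num)]
    exact mul_le_mul (by linarith) (mul_le_mul_of_nonneg_right hsqrt2 (sqrt_nonneg m))
      (by positivity) (by linarith)
  nlinarith [mul_nonneg (sqrt_nonneg V) (sqrt_nonneg (log p)), sqrt_nonneg m]

/-- Maximal inequality for centered sums of independent random vectors in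
`ℝ^p`, `p ≥ 2`, with a universal constant `K`. -/
theorem maximal_inequality_centered :
    ∃ K : ℝ, 0 < K ∧
      ∀ (Ω : Type) (_ : MeasurableSpace Ω) (P : Measure Ω), IsProbabilityMeasure P →
      ∀ (n p : ℕ), 2 ≤ p →
      ∀ (Z : Fin n → Ω → Fin p → ℝ), (∀ i, Measurable (Z i)) →
      iIndepFun Z P →
      (∀ i j, Integrable (fun ω => (Z i ω j) ^ 2) P) →
      (∫ ω, (⨆ j, |∑ i, (Z i ω j - ∫ ω', Z i ω' j ∂P)|) ∂P)
        ≤ K * (Real.sqrt (⨆ j, ∑ i, ∫ ω, (Z i ω j) ^ 2 ∂P) * Real.sqrt (Real.log p)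
            + Real.sqrt (∫ ω, (⨆ i, ⨆ j, |Z i ω j|) ^ 2 ∂P) * Real.log p) := by
  refine ⟨17, by norm_num, fun Ω _ P _ n p hp Z hZ hind hZ2 => ?_⟩
  have : Nonempty (Fin p) := ⟨⟨0, by omega⟩⟩
  have h := integral_iSup_abs_sum_sub_integral_le_sqrt hZ hind hZ2
  rw [Fintype.card_fin] at h
  exact h.trans (two_sqrt_log_mul_add_le hp
    (Real.iSup_nonneg fun j => sum_nonneg fun i _ => integral_nonneg fun ω => sq_nonneg _) _)
end
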